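/- arXiv:2312.15456 — 3 statements merged into one kernel-verified Lean document; each statement's English description precedes it below -/
import Mathlib

section
/- If G is a nonabelian finite permutation group of order p^k (p prime), then G has a base of size at most k − 1. -/
lemma exists_base_of_card_dvd {Ω : Type*} [Fintype Ω] [Nonempty Ω] {p : ℕ} (hp : p.Prime) :
    ∀ m : ℕ, ∀ H : Subgroup (Equiv.Perm Ω), Nat.card H ∣ p ^ m →
      ∃ b : Fin m → Ω, ∀ g ∈ H, (∀ i, g (b i) = b i) → g = 1 := by
  intro m
  induction m with
  | zero =>
    intro H hH
    rw [pow_zero, Nat.dvd_one, Subgroup.card_eq_one] at hH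
    exact ⟨fun _ => Classical.arbitrary Ω, fun g hg _ => by simpa [hH] using hg⟩
  | succ m ih =>
    intro H hH
    by_cases hbot : H = ⊥
    · exact ⟨fun _ => Classical.arbitrary Ω, fun g hg _ => by simpa [hbot] using hg⟩
    · obtain ⟨g, hgH, hg1⟩ : ∃ g ∈ H, g ≠ 1 := by
        by_contra h
        push_neg at h
        exact hbot (Subgroup.eq_bot_iff_forall H |>.mpr h)
      obtain ⟨ω, hω⟩ : ∃ ω : Ω, g ω ≠ ω := by
        by_contra h
        push_neg at h
        exact hg1 (Equiv.ext h)
      set H' := H ⊓ MulAction.stabilizer (Equiv.Perm Ω) ω with hH'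
      have hle : H' ≤ H := inf_le_left
      have hne : H' ≠ H := by
        intro h
        apply hω
        have : g ∈ H' := h ▸ hgH
        simpa [MulAction.mem_stabilizer_iff, Equiv.Perm.smul_def] using this.2
      have hd : Nat.card H' ∣ p ^ (m + 1) := (Subgroup.card_dvd_of_le hle).trans hH
      obtain ⟨i, hi, hci⟩ := (Nat.dvd_prime_pow hp).mp hd
      have him : i ≤ m := by
        rcases Nat.lt_succ_iff_lt_or_eq.mp (Nat.lt_succ_of_le hi) with h | h
        · omega
        · exfalso
          apply hne
          apply Subgroup.eq_of_le_of_card_ge hle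
          calc Nat.card H ≤ p ^ (m + 1) := Nat.le_of_dvd (pow_pos hp.pos _) hH
            _ = Nat.card H' := by rw [hci, h]
      obtain ⟨b', hb'⟩ := ih H' (by rw [hci]; exact pow_dvd_pow p him)
      refine ⟨Fin.cons ω b', fun g' hg' hfix => ?_⟩
      have hg'ω : g' ω = ω := by simpa using hfix 0
      have hmem : g' ∈ H' := ⟨hg', by simpa [MulAction.mem_stabilizer_iff, Equiv.Perm.smul_def]⟩
      exact hb' g' hmem fun i => by simpa using hfix i.succ

/-- A nonabelian finite permutation group of order `p ^ k` (`p` prime)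
has a base of size at most `k - 1`. -/
theorem nonabelian_pGroup_base_le {Ω : Type*} [Fintype Ω]
    (G : Subgroup (Equiv.Perm Ω)) (p k : ℕ) (hp : p.Prime)
    (hcard : Nat.card G = p ^ k)
    (hnonab : ∃ a ∈ G, ∃ b ∈ G, a * b ≠ b * a) :
    ∃ b : Fin (k - 1) → Ω, ∀ g ∈ G, (∀ i, g (b i) = b i) → g = 1 := by
  haveI : Fact p.Prime := ⟨hp⟩
  obtain ⟨a, ha, b, hb, hab⟩ := hnonab
  -- Ω is nonempty
  rcases isEmpty_or_nonempty Ω with hΩ | hΩ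
  · exact absurd (Equiv.ext fun x => hΩ.elim x) hab
  -- k ≥ 2
  have hk2 : 2 ≤ k := by
    by_contra hk
    interval_cases k
    · have : Subsingleton G := by
        rw [pow_zero] at hcard
        exact Nat.card_eq_one_iff_unique.mp hcard |>.1
      exact hab (congrArg Subtype.val
        (Subsingleton.elim (⟨a * b, mul_mem ha hb⟩ : G) ⟨b * a, mul_mem hb ha⟩))
    · rw [pow_one] at hcard
      haveI : IsCyclic G := isCyclic_of_prime_card hcard
      have := (IsCyclic.commGroup (α := G)).mul_comm ⟨a, ha⟩ ⟨b, hb⟩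
      exact hab (congrArg Subtype.val this)
  by_cases hA : ∃ ω : Ω,
      Nat.card ↥(G ⊓ MulAction.stabilizer (Equiv.Perm Ω) ω) ∣ p ^ (k - 2)
  · -- some stabilizer is small: recurse
    obtain ⟨ω, hω⟩ := hA
    obtain ⟨b', hb'⟩ := exists_base_of_card_dvd hp (k - 2) _ hω
    have hm : k - 2 + 1 = k - 1 := by omega
    rw [← hm]
    refine ⟨Fin.cons ω b', fun g hg hfix => ?_⟩
    have hgω : g ω = ω := by simpa using hfix 0
    have hmem : g ∈ G ⊓ MulAction.stabilizer (Equiv.Perm Ω) ω :=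
      ⟨hg, by simpa [MulAction.mem_stabilizer_iff, Equiv.Perm.smul_def]⟩
    exact hb' g hmem fun i => by simpa using hfix i.succ
  · -- every stabilizer has index ≤ p: contradiction with nonabelian
    exfalso
    push_neg at hA
    apply hab
    ext ω
    set Hω := G ⊓ MulAction.stabilizer (Equiv.Perm Ω) ω with hHω
    have hle : Hω ≤ G := inf_le_left
    have hd : Nat.card Hω ∣ p ^ k := hcard ▸ Subgroup.card_dvd_of_le hle
    obtain ⟨j, hj, hcj⟩ := (Nat.dvd_prime_pow hp).mp hd
    have hjk : k - 1 ≤ j := by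
      by_contra h
      exact hA ω (hcj ▸ pow_dvd_pow p (by omega))
    set K := Hω.subgroupOf G with hK
    have hcK : Nat.card K = p ^ j := by
      rw [← hcj]
      exact Nat.card_congr (Subgroup.subgroupOfEquivOfLe hle).toEquiv
    have hidx : K.index = p ^ (k - j) := by
      have h1 : Nat.card K * K.index = p ^ k := by
        rw [Subgroup.card_mul_index, hcard]
      rw [hcK] at h1
      have : p ^ j * K.index = p ^ j * p ^ (k - j) := by
        rw [h1, ← pow_add]
        congr 1
        omega
      exact Nat.eq_of_mul_eq_mul_left (pow_pos hp.pos j) this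
    rcases Nat.lt_or_ge j k with hjlt | hjge
    · -- index = p
      have hkj : k - j = 1 := by omega
      rw [hkj, pow_one] at hidx
      -- K is a coatom
      have hcoatom : IsCoatom K := by
        constructor
        · intro h
          rw [← Subgroup.index_eq_one, hidx] at h
          exact hp.one_lt.ne' h
        · intro M hM
          have hdvd : M.index ∣ p :=
            ⟨K.relIndex M, by rw [← hidx, ← Subgroup.relIndex_mul_index hM.le, mul_comm]⟩
          rcases (Nat.dvd_prime hp).mp hdvd with h | h
          · exact Subgroup.index_eq_one.mp h
          · exfalso
            have hrel : K.relIndex M = 1 := by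
              have h2 := Subgroup.relIndex_mul_index hM.le
              rw [hidx, h] at h2
              exact Nat.eq_of_mul_eq_mul_right hp.pos (h2.trans (one_mul p).symm)
            exact hM.not_ge (Subgroup.relIndex_eq_one.mp hrel)
      have hpg : IsPGroup p G := IsPGroup.of_card hcard
      have hnc : NormalizerCondition G :=
        normalizerCondition_of_isNilpotent (h := hpg.isNilpotent)
      haveI hnorm : K.Normal := Subgroup.NormalizerCondition.normal_of_coatom _ hnc hcoatom
      have hqcard : Nat.card (G ⧸ K) = p := by
        rw [← hidx]; rfl
      haveI : IsCyclic (G ⧸ K) := isCyclic_of_prime_card hqcard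
      have hcomm := (IsCyclic.commGroup (α := G ⧸ K)).mul_comm
        (QuotientGroup.mk (⟨a, ha⟩ : G)) (QuotientGroup.mk (⟨b, hb⟩ : G))
      rw [← QuotientGroup.mk_mul, ← QuotientGroup.mk_mul] at hcomm
      have hmem : (⟨b, hb⟩ * ⟨a, ha⟩ : G)⁻¹ * (⟨a, ha⟩ * ⟨b, hb⟩) ∈ K :=
        QuotientGroup.eq.mp hcomm.symm
      rw [Subgroup.mem_subgroupOf] at hmem
      have hfix : ((b * a)⁻¹ * (a * b)) ω = ω := by
        have := hmem.2
        simpa [MulAction.mem_stabilizer_iff, Equiv.Perm.smul_def] using this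
      have := congrArg (b * a) hfix
      simpa [Equiv.Perm.mul_apply] using this
    · -- index = 1 : everything fixes ω
      have hkj : k - j = 0 := by omega
      rw [hkj, pow_zero] at hidx
      have htop : G ≤ Hω := Subgroup.subgroupOf_eq_top.mp (Subgroup.index_eq_one.mp hidx)
      have haω : a ω = ω := by
        have := (htop ha).2
        simpa [MulAction.mem_stabilizer_iff, Equiv.Perm.smul_def] using this
      have hbω : b ω = ω := by
        have := (htop hb).2
        simpa [MulAction.mem_stabilizer_iff, Equiv.Perm.smul_def] using this
      simp [Equiv.Perm.mul_apply, haω, hbω]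
end

section
/- Every regular permutation group is 2-closed: if G ≤ Sym(Ω) acts regularly on Ω, then any permutation of Ω preserving all G-orbits on Ω × Ω lies in G. -/
/-- Every regular permutation group is 2-closed: if `G ≤ Sym(Ω)` is
transitive with trivial point stabilizers, then any permutation preserving all
`G`-orbits on ordered pairs lies in `G`. -/
theorem regular_two_closed {Ω : Type*} (G : Subgroup (Equiv.Perm Ω))
    (htrans : ∀ α β : Ω, ∃ g ∈ G, g α = β)
    (hfree : ∀ g ∈ G, ∀ α : Ω, g α = α → g = 1) :
    ∀ g : Equiv.Perm Ω,
      (∀ α β : Ω, ∃ h ∈ G, h α = g α ∧ h β = g β) → g ∈ G := by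
  intro g hg
  by_cases hΩ : Nonempty Ω
  · obtain ⟨α⟩ := hΩ
    obtain ⟨h, hG, hα, -⟩ := hg α α
    have hgh : g = h := by
      ext β
      obtain ⟨k, kG, kα, kβ⟩ := hg α β
      have hfix : (h⁻¹ * k) α = α := by
        simp [Equiv.Perm.mul_apply, kα, ← hα]
      have h1 : h⁻¹ * k = 1 := hfree _ (mul_mem (inv_mem hG) kG) α hfix
      have hk : h = k := inv_mul_eq_one.mp h1
      rw [← kβ, hk]
    exact hgh ▸ hG
  · have : g = 1 := Equiv.ext fun x => absurd ⟨x⟩ hΩ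
    exact this ▸ one_mem G
end

section
/- Every nonabelian finite group of order at most p^k (p prime) is totally k-closed: in every faithful permutation representation of such a group G on a finite set Ω, every permutation of Ω preserving all G-orbits on Ω^k lies in G. -/
open MulAction

/-- Greedy base lemma: a subgroup of order at most `p ^ m` of a `p`-group acting on `Ω`
admits a list of at most `m` points whose pointwise stabilizer acts trivially. -/
lemma exists_base_list {G : Type*} [Group G] [Finite G] {p : ℕ} (hp : p.Prime)
    (hpG : IsPGroup p G) {Ω : Type} [MulAction G Ω] :
    ∀ (m : ℕ) (H : Subgroup G), Nat.card H ≤ p ^ m →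
      ∃ l : List Ω, l.length ≤ m ∧
        ∀ h ∈ H, (∀ ω ∈ l, h • ω = ω) → ∀ ω : Ω, h • ω = ω := by
  haveI : Fact p.Prime := ⟨hp⟩
  intro m
  induction m with
  | zero =>
    intro H hH
    refine ⟨[], le_refl _, fun h hh _ ω => ?_⟩
    have hbot : H = ⊥ := Subgroup.eq_bot_of_card_le H (by simpa using hH)
    rw [hbot, Subgroup.mem_bot] at hh
    rw [hh, one_smul]
  | succ m ih =>
    intro H hH
    by_cases htriv : ∀ h ∈ H, ∀ ω : Ω, h • ω = ω
    · exact ⟨[], Nat.zero_le _, fun h hh _ => htriv h hh⟩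
    · push_neg at htriv
      obtain ⟨h₀, hh₀, ω₁, hω₁⟩ := htriv
      set H' := H ⊓ MulAction.stabilizer G ω₁ with hH'def
      have hne : H' ≠ H := by
        intro he
        have : h₀ ∈ H' := he.symm ▸ hh₀
        exact hω₁ this.2
      have hcard' : Nat.card H' ≤ p ^ m := by
        obtain ⟨a, ha⟩ := (hpG.to_subgroup H').exists_card_eq
        obtain ⟨b, hb⟩ := (hpG.to_subgroup H).exists_card_eq
        have hdvd : Nat.card H' ∣ Nat.card H := Subgroup.card_dvd_of_le inf_le_left
        rw [ha, hb] at hdvd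
        have hab : a ≤ b := (Nat.pow_dvd_pow_iff_le_right hp.one_lt).mp hdvd
        have hcardne : Nat.card H' ≠ Nat.card H := by
          intro he
          exact hne (Subgroup.eq_of_le_of_card_ge inf_le_left (le_of_eq he.symm))
        have habne : a ≠ b := by
          intro he; rw [ha, hb, he] at hcardne; exact hcardne rfl
        have hbm : b ≤ m + 1 := by
          rw [hb] at hH
          exact (Nat.pow_le_pow_iff_right hp.one_lt).mp hH
        have ham : a ≤ m := by omega
        rw [ha]
        exact Nat.pow_le_pow_right hp.pos ham
      obtain ⟨l, hl, hbase⟩ := ih H' hcard'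
      refine ⟨ω₁ :: l, by simpa using hl, ?_⟩
      intro h hh hfix ω
      have hmem : h ∈ H' := Subgroup.mem_inf.mpr
        ⟨hh, MulAction.mem_stabilizer_iff.mpr (hfix ω₁ List.mem_cons_self)⟩
      exact hbase h hmem (fun x hx => hfix x (List.mem_cons_of_mem _ hx)) ω

/-- Every nonabelian finite `p`-group of order at most `p ^ k`
(`p` prime) is totally `k`-closed: in every faithful permutation representation on
a finite set `Ω`, every permutation of `Ω` preserving all `G`-orbits on `Ω^k` lies
in (the image of) `G`. -/
theorem nonabelian_le_pPow_totally_kClosed (G : Type*) [Group G] [Finite G]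
    (p k : ℕ) (hp : p.Prime) (hpG : IsPGroup p G) (hcard : Nat.card G ≤ p ^ k)
    (hnonab : ∃ a b : G, a * b ≠ b * a) :
    ∀ (Ω : Type) [Fintype Ω] (φ : G →* Equiv.Perm Ω), Function.Injective φ →
      ∀ g : Equiv.Perm Ω,
        (∀ t : Fin k → Ω, ∃ h : G, ∀ i, φ h (t i) = g (t i)) →
        g ∈ φ.range := by
  intro Ω _ φ hinj g hg
  haveI : Fact p.Prime := ⟨hp⟩
  letI : MulAction G Ω := MulAction.compHom Ω φ
  have hsmul : ∀ (a : G) (ω : Ω), a • ω = φ a ω := fun a ω => rfl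
  by_cases horb : ∀ ω : Ω, Nat.card (MulAction.orbit G ω) ≤ p
  · -- all orbits small ⇒ G abelian, contradiction
    exfalso
    obtain ⟨a, b, hab⟩ := hnonab
    apply hab
    apply hinj
    ext ω
    let O := MulAction.orbit G ω
    let f : G →* Equiv.Perm O := MulAction.toPermHom G O
    -- the image of `f` is cyclic
    have hfR : IsPGroup p f.range := hpG.of_surjective f.rangeRestrict f.rangeRestrict_surjective
    haveI : Finite O := Subtype.finite
    haveI : Finite (Equiv.Perm O) := by
      haveI := Fintype.ofFinite O
      haveI : DecidableEq O := Classical.decEq _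
      infer_instance
    obtain ⟨m, hm⟩ := hfR.exists_card_eq
    have hdvd1 : Nat.card f.range ∣ Nat.card (Equiv.Perm O) :=
      Subgroup.card_subgroup_dvd_card _
    have hcardperm : Nat.card (Equiv.Perm O) = Nat.factorial (Nat.card O) := by
      haveI := Fintype.ofFinite O
      haveI : DecidableEq O := Classical.decEq _
      rw [Nat.card_eq_fintype_card, Fintype.card_perm, Nat.card_eq_fintype_card]
    have hdvd2 : p ^ m ∣ Nat.factorial p := by
      rw [hm, hcardperm] at hdvd1
      exact hdvd1.trans (Nat.factorial_dvd_factorial (horb ω))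
    have hm1 : m ≤ 1 := by
      by_contra hm2
      have hppos : 0 < p := hp.pos
      have h2 : p ^ 2 ∣ Nat.factorial p := dvd_trans (pow_dvd_pow p (by omega)) hdvd2
      have hpfac : Nat.factorial p = p * Nat.factorial (p - 1) := by
        conv_lhs => rw [show p = (p - 1) + 1 by omega]
        rw [Nat.factorial_succ]
        congr 1
        omega
      have : p ∣ Nat.factorial (p - 1) := by
        rw [hpfac, pow_two] at h2
        exact (Nat.mul_dvd_mul_iff_left hp.pos).mp h2
      have := (Nat.Prime.dvd_factorial hp).mp this
      omega
    have hdvdp : Nat.card f.range ∣ p := by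
      rw [hm]
      calc p ^ m ∣ p ^ 1 := pow_dvd_pow p hm1
        _ = p := pow_one p
    haveI : IsCyclic f.range := isCyclic_of_card_dvd_prime hdvdp
    letI : CommGroup f.range := IsCyclic.commGroup
    have hcomm : f a * f b = f b * f a := by
      have := mul_comm (⟨f a, ⟨a, rfl⟩⟩ : f.range) (⟨f b, ⟨b, rfl⟩⟩ : f.range)
      exact congrArg Subtype.val this
    have hpt : (f a * f b) ⟨ω, MulAction.mem_orbit_self ω⟩
        = (f b * f a) ⟨ω, MulAction.mem_orbit_self ω⟩ := by rw [hcomm]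
    have hco := congrArg Subtype.val hpt
    simp only [Equiv.Perm.mul_apply, MulAction.toPermHom_apply, MulAction.toPerm_apply,
      MulAction.orbit.coe_smul, f] at hco
    show φ (a * b) ω = φ (b * a) ω
    rw [← hsmul, ← hsmul, mul_smul, mul_smul]
    exact hco
  · -- some orbit of size ≥ p²
    push_neg at horb
    obtain ⟨ω₀, hω₀⟩ := horb
    haveI := Fintype.ofFinite G
    haveI : Fintype (MulAction.orbit G ω₀) := Fintype.ofFinite _
    haveI : Fintype (MulAction.stabilizer G ω₀) := Fintype.ofFinite _
    have horbstab : Nat.card (MulAction.orbit G ω₀) * Nat.card (MulAction.stabilizer G ω₀)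
        = Nat.card G := by
      simp only [Nat.card_eq_fintype_card]
      exact MulAction.card_orbit_mul_card_stabilizer_eq_card_group G ω₀
    -- orbit size is a power of p, and > p, hence divisible by p²
    obtain ⟨n, hn⟩ := hpG.exists_card_eq
    have horbdvd : Nat.card (MulAction.orbit G ω₀) ∣ Nat.card G :=
      ⟨Nat.card (MulAction.stabilizer G ω₀), horbstab.symm⟩
    obtain ⟨e, he, hoe⟩ := (Nat.dvd_prime_pow hp).mp (hn ▸ horbdvd)
    have he2 : 2 ≤ e := by
      by_contra he1
      have : Nat.card (MulAction.orbit G ω₀) ≤ p := by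
        rw [hoe]
        calc p ^ e ≤ p ^ 1 := Nat.pow_le_pow_right hp.pos (by omega)
          _ = p := pow_one p
      omega
    have hp2orb : p ^ 2 ≤ Nat.card (MulAction.orbit G ω₀) := by
      rw [hoe]; exact Nat.pow_le_pow_right hp.pos he2
    have hk2 : 2 ≤ k := by
      have h1 : p ^ 2 ≤ p ^ k := by
        calc p ^ 2 ≤ Nat.card (MulAction.orbit G ω₀) := hp2orb
          _ ≤ Nat.card G := Nat.le_of_dvd Nat.card_pos horbdvd
          _ ≤ p ^ k := hcard
      exact (Nat.pow_le_pow_iff_right hp.one_lt).mp h1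
    have hstab : Nat.card (MulAction.stabilizer G ω₀) ≤ p ^ (k - 2) := by
      have hmul : p ^ 2 * Nat.card (MulAction.stabilizer G ω₀) ≤ p ^ 2 * p ^ (k - 2) := by
        calc p ^ 2 * Nat.card (MulAction.stabilizer G ω₀)
            ≤ Nat.card (MulAction.orbit G ω₀) * Nat.card (MulAction.stabilizer G ω₀) :=
              Nat.mul_le_mul_right _ hp2orb
          _ = Nat.card G := horbstab
          _ ≤ p ^ k := hcard
          _ = p ^ 2 * p ^ (k - 2) := by rw [← pow_add]; congr 1; omega
      exact Nat.le_of_mul_le_mul_left hmul (pow_pos hp.pos 2)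
    obtain ⟨l, hl, hbase⟩ := exists_base_list (Ω := Ω) hp hpG (k - 2) (MulAction.stabilizer G ω₀) hstab
    set L : List Ω := ω₀ :: l with hLdef
    have hLlen : L.length ≤ k - 1 := by simp [hLdef]; omega
    have hLk : L.length ≤ k := by omega
    -- trivial pointwise stabilizer of L
    have hfix : ∀ h : G, (∀ x ∈ L, h • x = x) → h = 1 := by
      intro h hfixh
      have hmem : h ∈ MulAction.stabilizer G ω₀ := by
        rw [MulAction.mem_stabilizer_iff]
        exact hfixh ω₀ List.mem_cons_self
      have hall : ∀ ω, h • ω = ω :=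
        hbase h hmem (fun x hx => hfixh x (List.mem_cons_of_mem _ hx))
      apply hinj
      ext ω
      rw [← hsmul, hall, map_one, Equiv.Perm.one_apply]
    -- tuples: base points followed by an arbitrary point
    have hgs := fun ω : Ω => hg (fun i : Fin k => L.getD i ω)
    choose hfun hprop using hgs
    have hagree : ∀ ω : Ω, ∀ x ∈ L, φ (hfun ω) x = g x := by
      intro ω x hx
      obtain ⟨j, hj, rfl⟩ := List.mem_iff_getElem.mp hx
      have hjk : j < k := lt_of_lt_of_le hj hLk
      have := hprop ω ⟨j, hjk⟩
      rwa [List.getD_eq_getElem L ω (by simpa using hj)] at this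
    have hval : ∀ ω : Ω, φ (hfun ω) ω = g ω := by
      intro ω
      have hk1 : k - 1 < k := by omega
      have := hprop ω ⟨k - 1, hk1⟩
      rwa [List.getD_eq_default L ω (by simpa using hLlen)] at this
    have huniq : ∀ ω : Ω, hfun ω = hfun ω₀ := by
      intro ω
      have hone : (hfun ω₀)⁻¹ * hfun ω = 1 := by
        apply hfix
        intro x hx
        rw [hsmul, map_mul, map_inv, Equiv.Perm.mul_apply, hagree ω x hx,
          ← hagree ω₀ x hx, Equiv.Perm.inv_def, Equiv.symm_apply_apply]
      have := mul_eq_one_iff_eq_inv.mp hone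
      exact (inv_injective this).symm
    refine ⟨hfun ω₀, ?_⟩
    ext ω
    rw [← huniq ω]
    exact hval ω
end
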